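/- Let $r \ge 3$, $s \ge 2$, and $n \ge 2$ be integers with $n \ne r$ and $n \ne r-1$, and set $(b_1, b_2, b_3) = (r, -s, n)$. Then there is no pair of subsets $I, J \subseteq \{1,2,3\}$ satisfying all of the following: (i) $1 \notin I \cap J$; (ii) neither $I$ nor $J$ contains two consecutive indices; (iii) if $1 \in I$ then $\sum_{j \in J} b_j - \sum_{i \in I} b_i = 0$; (iv) if $1 \notin I$ then $\sum_{j \in J} b_j - \big( (\sum_{i \in I} b_i) + 1 \big) = 0$. (By Baker's classification, closed essential surfaces in the exterior of the knot $[b_1, b_2, b_3]$ correspond bijectively to such pairs $(I,J)$; hence the knot $K^n_{r,s} = [r,-s,n]$ is small.) -/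

import Mathlib

/-!
A set of indices in `{1, 2, 3}` without consecutive elements is one of `∅, {1}, {2}, {3}, {1, 3}`,
so with `b = (r, -s, n)` every sum in Baker's conditions is one of `0, r, -s, n, r + n`.
Comparing these five values shows that (iii) would force `n = r` and (iv) would force `n = r - 1`;
every other coincidence is ruled out by the sign and size constraints on `r`, `s` and `n`.
-/

def Finset.NoConsecutive (I : Finset ℕ) : Prop :=
  ∀ i, ¬ (i ∈ I ∧ i + 1 ∈ I)

namespace Finset.NoConsecutive

variable {I : Finset ℕ}

theorem eq_of_one_mem (hI : I ⊆ {1, 2, 3}) (hcons : I.NoConsecutive) (h1 : 1 ∈ I) :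
    I = {1} ∨ I = {1, 3} := by
  have h2 : 2 ∉ I := fun h2 => hcons 1 ⟨h1, h2⟩
  rw [← Finset.mem_powerset] at hI
  fin_cases hI <;> simp_all <;> decide

theorem eq_of_one_notMem (hI : I ⊆ {1, 2, 3}) (hcons : I.NoConsecutive) (h1 : 1 ∉ I) :
    I = ∅ ∨ I = {2} ∨ I = {3} := by
  have h23 : ¬ (2 ∈ I ∧ 3 ∈ I) := hcons 2
  rw [← Finset.mem_powerset] at hI
  fin_cases hI <;> simp_all <;> decide

variable {M : Type*} [AddCommMonoid M] (b : ℕ → M)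

theorem sum_eq_of_one_mem (hI : I ⊆ {1, 2, 3}) (hcons : I.NoConsecutive) (h1 : 1 ∈ I) :
    ∑ i ∈ I, b i = b 1 ∨ ∑ i ∈ I, b i = b 1 + b 3 := by
  rcases eq_of_one_mem hI hcons h1 with rfl | rfl <;> simp

theorem sum_eq_of_one_notMem (hI : I ⊆ {1, 2, 3}) (hcons : I.NoConsecutive) (h1 : 1 ∉ I) :
    ∑ i ∈ I, b i = 0 ∨ ∑ i ∈ I, b i = b 2 ∨ ∑ i ∈ I, b i = b 3 := by
  rcases eq_of_one_notMem hI hcons h1 with rfl | rfl | rfl <;> simp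

theorem sum_eq (hI : I ⊆ {1, 2, 3}) (hcons : I.NoConsecutive) :
    ∑ i ∈ I, b i = 0 ∨ ∑ i ∈ I, b i = b 1 ∨ ∑ i ∈ I, b i = b 2 ∨ ∑ i ∈ I, b i = b 3 ∨
      ∑ i ∈ I, b i = b 1 + b 3 := by
  by_cases h1 : 1 ∈ I
  · rcases sum_eq_of_one_mem b hI hcons h1 with h | h <;> simp [h]
  · rcases sum_eq_of_one_notMem b hI hcons h1 with h | h | h <;> simp [h]

end Finset.NoConsecutive

open Finset.NoConsecutive in
/-- For `r ≥ 3`, `s ≥ 2`, `n ≥ 2` with `n ≠ r` and `n ≠ r - 1`, and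
`(b 1, b 2, b 3) = (r, -s, n)`, there is no pair of subsets `I, J ⊆ {1,2,3}`
satisfying Baker's conditions (i)–(iv); hence `K^n_{r,s}` is small. -/
theorem stmt4 (r s n : ℤ) (hr : 3 ≤ r) (hs : 2 ≤ s) (hn : 2 ≤ n)
    (hnr : n ≠ r) (hnr' : n ≠ r - 1)
    (b : ℕ → ℤ) (hb1 : b 1 = r) (hb2 : b 2 = -s) (hb3 : b 3 = n) :
    ¬ ∃ I J : Finset ℕ, I ⊆ {1, 2, 3} ∧ J ⊆ {1, 2, 3} ∧
      ¬ (1 ∈ I ∧ 1 ∈ J) ∧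
      (∀ i, ¬ (i ∈ I ∧ i + 1 ∈ I)) ∧
      (∀ i, ¬ (i ∈ J ∧ i + 1 ∈ J)) ∧
      (1 ∈ I → (∑ j ∈ J, b j) - (∑ i ∈ I, b i) = 0) ∧
      (1 ∉ I → (∑ j ∈ J, b j) - ((∑ i ∈ I, b i) + 1) = 0) := by
  rintro ⟨I, J, hI, hJ, h11, hcI, hcJ, hIn, hOut⟩
  by_cases h1 : 1 ∈ I
  · have hJI := hIn h1
    have hJ1 : 1 ∉ J := fun hJ1 => h11 ⟨h1, hJ1⟩
    rcases sum_eq_of_one_mem b hI hcI h1 with hsI | hsI <;>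
      rcases sum_eq_of_one_notMem b hJ hcJ hJ1 with hsJ | hsJ | hsJ <;>
      omega
  · have hJI := hOut h1
    rcases sum_eq_of_one_notMem b hI hcI h1 with hsI | hsI | hsI <;>
      rcases sum_eq b hJ hcJ with hsJ | hsJ | hsJ | hsJ | hsJ <;>
      omega
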